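/- The power sums p_1, …, p_n, where p_i(x) = x_1^i + ⋯ + x_n^i, generate the ring of S_n-invariant polynomials ℝ[x_1,…,x_n]^{S_n}: every S_n-invariant polynomial f can be written as f = P(p_1, …, p_n) for some polynomial P in n variables. Since each p_i = n · γ_{C_n}(x_1^i) is obtained by applying the Reynolds operator to a one-variable polynomial, the Reynolds dimension of S_n acting on ℝ^n is 1. -/

import Mathlib

open MvPolynomial
open Fin.NatCast

/-! By the fundamental theorem of symmetric polynomials every symmetric polynomial is a
polynomial in `e_1, …, e_n`, and Newton's identities `k e_k = ± ∑_{a+b=k, a<k} ± e_a p_b`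
express each `e_k`, after dividing by `k`, as a polynomial in `p_1, …, p_k`. For the second
part, `(finRotate n)^k` maps `x_j` to `x_{j+k}`, so the `C_n`-orbit sum of `x_j^i` runs over
every variable exactly once. -/

theorem finRotate_pow_apply {n : ℕ} [NeZero n] (k : ℕ) (j : Fin n) :
    (finRotate n ^ k) j = j + (k : Fin n) := by
  induction k with
  | zero => simp
  | succ k ih => rw [pow_succ', Equiv.Perm.mul_apply, ih, finRotate_apply, Nat.cast_succ, add_assoc]

namespace MvPolynomial

theorem psum_eq_sum_range_rename_finRotate_pow {n : ℕ} [NeZero n] (R : Type*) [CommSemiring R]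
    (j : Fin n) (i : ℕ) :
    psum (Fin n) R i = ∑ k ∈ Finset.range n, rename (finRotate n ^ k) (X j ^ i) := by
  simp only [map_pow, rename_X, finRotate_pow_apply]
  rw [← Fin.sum_univ_eq_sum_range (fun k => (X (j + (k : Fin n)) : MvPolynomial (Fin n) R) ^ i)]
  simp only [Fin.cast_val_eq_self]
  exact (Equiv.sum_comp (Equiv.addLeft j) (fun l => X l ^ i)).symm

variable (σ : Type*) [Fintype σ] (R : Type*) [CommRing R] [Algebra ℚ R]

theorem esymm_mem_adjoin_psum (k : ℕ) :
    esymm σ R k ∈ Algebra.adjoin R (psum σ R '' Set.Icc 1 k) := by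
  induction k using Nat.strong_induction_on with
  | _ k ih =>
  rcases Nat.eq_zero_or_pos k with rfl | hk_pos
  · simp
  set S := Algebra.adjoin R (psum σ R '' Set.Icc 1 k)
  have hmul : (k : MvPolynomial σ R) * esymm σ R k ∈ S := by
    rw [mul_esymm_eq_sum]
    refine mul_mem (pow_mem (neg_mem (one_mem S)) _) (Subalgebra.sum_mem S fun a ha => ?_)
    rw [Finset.mem_filter, Finset.HasAntidiagonal.mem_antidiagonal] at ha
    refine mul_mem (mul_mem (pow_mem (neg_mem (one_mem S)) _) ?_) ?_
    · exact Algebra.adjoin_mono (Set.image_mono (Set.Icc_subset_Icc_right ha.2.le)) (ih _ ha.2)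
    · exact Algebra.subset_adjoin ⟨a.2, ⟨by omega, by omega⟩, rfl⟩
  have hk : (k : ℚ) ≠ 0 := Nat.cast_ne_zero.mpr hk_pos.ne'
  convert S.smul_mem hmul (algebraMap ℚ R (k : ℚ)⁻¹) using 1
  rw [algebraMap_smul, ← nsmul_eq_mul, ← Nat.cast_smul_eq_nsmul ℚ, inv_smul_smul₀ hk]

variable {σ R}

theorem mem_range_aeval_psum_of_isSymmetric {n : ℕ} (hn : Fintype.card σ ≤ n)
    {p : MvPolynomial σ R} (hp : p.IsSymmetric) :
    p ∈ (aeval (R := R) fun i : Fin n => psum σ R (i + 1)).range := by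
  obtain ⟨Q, hQ⟩ := esymmAlgHom_surjective R hn ⟨p, hp⟩
  have hesymm : (aeval (R := R) fun i : Fin n => esymm σ R (i + 1)).range ≤
      (aeval (R := R) fun i : Fin n => psum σ R (i + 1)).range := by
    rw [aeval_range, aeval_range]
    refine Algebra.adjoin_le (Set.range_subset_iff.2 fun i => ?_)
    refine Algebra.adjoin_mono ?_ (esymm_mem_adjoin_psum σ R (i + 1))
    rintro _ ⟨j, ⟨hj_pos, hj_le⟩, rfl⟩
    exact ⟨⟨j - 1, by omega⟩, congrArg (psum σ R) (Nat.sub_add_cancel hj_pos)⟩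
  have hpQ : aeval (fun i : Fin n => esymm σ R (i + 1)) Q = p := by rw [← esymmAlgHom_apply, hQ]
  exact hesymm ⟨Q, hpQ⟩

end MvPolynomial

/-- **Power sums generate the invariant ring, and the Reynolds dimension of
`S_n` acting on `ℝ^n` is 1.**  Every `S_n`-invariant (symmetric) polynomial
`f ∈ ℝ[x_1,…,x_n]` can be written as `f = P(p_1, …, p_n)` where
`p_i = x_1^i + ⋯ + x_n^i`.  Moreover each power sum `p_i` is obtained by
applying the Reynolds operator of the cyclic group `C_n` to the one-variable
polynomial `x_1^i`:  `p_i = n · γ_{C_n}(x_1^i) = ∑_{k<n} (finRotate n)^k · x_1^i`,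
so the Reynolds dimension of `S_n` is `1`. -/
theorem powerSums_generate_and_reynolds_dimension_one (n : ℕ) (hn : 1 ≤ n) :
    (∀ f : MvPolynomial (Fin n) ℝ, f.IsSymmetric →
      ∃ P : MvPolynomial (Fin n) ℝ,
        f = aeval (fun k : Fin n => psum (Fin n) ℝ (k.val + 1)) P) ∧
    (∀ i : ℕ, psum (Fin n) ℝ i =
      ∑ k ∈ Finset.range n,
        rename (⇑(finRotate n ^ k)) ((X ⟨0, hn⟩ : MvPolynomial (Fin n) ℝ) ^ i)) := by
  have : NeZero n := ⟨by omega⟩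
  refine ⟨fun f hf => ?_, psum_eq_sum_range_rename_finRotate_pow ℝ _⟩
  obtain ⟨P, hP⟩ := mem_range_aeval_psum_of_isSymmetric (Fintype.card_fin n).le hf
  exact ⟨P, hP.symm⟩
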